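/- arXiv:2012.13943 — 5 statements merged into one kernel-verified Lean document; each statement's English description precedes it below -/
import Mathlib

section
/- Let H be a real inner product space, L : H → H a symmetric linear map (⟨L x, y⟩ = ⟨x, L y⟩ for all x, y), and τ ≠ 0. Suppose sequences P, Q, G₁, G₂ : ℕ → H and r : ℕ → ℝ satisfy, for every k ∈ ℕ: P(k+1) − P(k) = τ·(L((Q(k+1)+Q(k))/2) + ((r(k+1)+r(k))/2)·G₁(k)), Q(k+1) − Q(k) = τ·(−L((P(k+1)+P(k))/2) − ((r(k+1)+r(k))/2)·G₂(k)), and r(k+1) − r(k) = ½(⟨G₁(k), Q(k+1)−Q(k)⟩ + ⟨G₂(k), P(k+1)−P(k)⟩). Then the discrete modified Hamiltonian H̃(k) := ½(⟨L(P(k)), P(k)⟩ + ⟨L(Q(k)), Q(k)⟩) + r(k)² satisfies H̃(k) = H̃(0) for all k ∈ ℕ. -/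
open scoped RealInnerProductSpace

/-- Conservation of the modified discrete Hamiltonian by the CN-SAV scheme. -/
theorem sav_discrete_modified_hamiltonian_conservation
    {H : Type*} [NormedAddCommGroup H] [InnerProductSpace ℝ H]
    (L : H →ₗ[ℝ] H) (hL : ∀ x y : H, ⟪L x, y⟫ = ⟪x, L y⟫)
    (τ : ℝ) (hτ : τ ≠ 0)
    (P Q G₁ G₂ : ℕ → H) (r : ℕ → ℝ)
    (hP : ∀ k : ℕ, P (k+1) - P k =
      τ • (L ((2:ℝ)⁻¹ • (Q (k+1) + Q k)) + ((r (k+1) + r k)/2) • G₁ k))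
    (hQ : ∀ k : ℕ, Q (k+1) - Q k =
      τ • (-(L ((2:ℝ)⁻¹ • (P (k+1) + P k))) - ((r (k+1) + r k)/2) • G₂ k))
    (hr : ∀ k : ℕ, r (k+1) - r k =
      (1/2) * (⟪G₁ k, Q (k+1) - Q k⟫ + ⟪G₂ k, P (k+1) - P k⟫)) :
    ∀ k : ℕ,
      (1/2) * (⟪L (P k), P k⟫ + ⟪L (Q k), Q k⟫) + (r k)^2 =
        (1/2) * (⟪L (P 0), P 0⟫ + ⟪L (Q 0), Q 0⟫) + (r 0)^2 := by
  have hsym : ∀ x y : H, ⟪L x, y⟫ = ⟪L y, x⟫ := fun x y =>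
    (hL x y).trans (real_inner_comm _ _)
  have key : ∀ k : ℕ,
      (1/2) * (⟪L (P (k+1)), P (k+1)⟫ + ⟪L (Q (k+1)), Q (k+1)⟫) + (r (k+1))^2 =
      (1/2) * (⟪L (P k), P k⟫ + ⟪L (Q k), Q k⟫) + (r k)^2 := by
    intro k
    -- difference identities
    have e1 : ⟪L (P (k+1)), P (k+1)⟫ - ⟪L (P k), P k⟫ =
        ⟪L (P (k+1) + P k), P (k+1) - P k⟫ := by
      rw [map_add, inner_add_left, inner_sub_right, inner_sub_right,
        hsym (P k) (P (k+1))]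
      ring
    have e2 : ⟪L (Q (k+1)), Q (k+1)⟫ - ⟪L (Q k), Q k⟫ =
        ⟪L (Q (k+1) + Q k), Q (k+1) - Q k⟫ := by
      rw [map_add, inner_add_left, inner_sub_right, inner_sub_right,
        hsym (Q k) (Q (k+1))]
      ring
    have E1 : ⟪L (P (k+1)), P (k+1)⟫ - ⟪L (P k), P k⟫ =
        τ * ((2:ℝ)⁻¹ * ⟪L (P (k+1) + P k), L (Q (k+1) + Q k)⟫
          + ((r (k+1) + r k)/2) * ⟪L (P (k+1) + P k), G₁ k⟫) := by
      rw [e1, hP k, real_inner_smul_right, map_smul, inner_add_right,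
        real_inner_smul_right, real_inner_smul_right]
    have E2 : ⟪L (Q (k+1)), Q (k+1)⟫ - ⟪L (Q k), Q k⟫ =
        τ * (-((2:ℝ)⁻¹ * ⟪L (P (k+1) + P k), L (Q (k+1) + Q k)⟫)
          - ((r (k+1) + r k)/2) * ⟪L (Q (k+1) + Q k), G₂ k⟫) := by
      rw [e2, hQ k, real_inner_smul_right, map_smul, inner_sub_right,
        inner_neg_right, real_inner_smul_right, real_inner_smul_right,
        real_inner_comm (L (Q (k+1) + Q k)) (L (P (k+1) + P k))]
    have E3 : r (k+1) - r k =
        (1/2) * (τ * (-((2:ℝ)⁻¹ * ⟪L (P (k+1) + P k), G₁ k⟫)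
            - ((r (k+1) + r k)/2) * ⟪G₁ k, G₂ k⟫)
          + τ * ((2:ℝ)⁻¹ * ⟪L (Q (k+1) + Q k), G₂ k⟫
            + ((r (k+1) + r k)/2) * ⟪G₂ k, G₁ k⟫)) := by
      rw [hr k, hP k, hQ k, real_inner_smul_right, real_inner_smul_right,
        inner_sub_right, inner_neg_right, inner_add_right, map_smul, map_smul,
        real_inner_smul_right, real_inner_smul_right, real_inner_smul_right,
        real_inner_smul_right,
        real_inner_comm (G₁ k) (L (P (k+1) + P k)),
        real_inner_comm (G₂ k) (L (Q (k+1) + Q k))]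
    have hc : ⟪G₂ k, G₁ k⟫ = ⟪G₁ k, G₂ k⟫ := real_inner_comm _ _
    rw [hc] at E3
    linear_combination (1/2) * E1 + (1/2) * E2 + (r (k+1) + r k) * E3
  intro k
  induction k with
  | zero => rfl
  | succ n ih => exact (key n).trans ih
end

section
/- Let H be a real inner product space, L : H → H a symmetric linear map (⟨L x, y⟩ = ⟨x, L y⟩ for all x, y), and τ ∈ ℝ. Suppose P⁺, P, Q⁺, Q, G₁, G₂ ∈ H and r⁺, r ∈ ℝ satisfy P⁺ − P = τ·(L((Q⁺+Q)/2) + ((r⁺+r)/2)·G₁) and Q⁺ − Q = τ·(−L((P⁺+P)/2) − ((r⁺+r)/2)·G₂). Then (‖P⁺‖² + ‖Q⁺‖²) − (‖P‖² + ‖Q‖²) = 2τ·((r⁺+r)/2)·(⟨G₁, (P⁺+P)/2⟩ − ⟨G₂, (Q⁺+Q)/2⟩). -/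
open scoped RealInnerProductSpace

/-- Key identity in the proof of the conservation of the L² norm for one step
of the CN-SAV scheme. -/
theorem sav_one_step_mass_identity
    {H : Type*} [NormedAddCommGroup H] [InnerProductSpace ℝ H]
    (L : H →ₗ[ℝ] H) (hL : ∀ x y : H, ⟪L x, y⟫ = ⟪x, L y⟫)
    (τ : ℝ) (Pp P Qp Q G₁ G₂ : H) (rp r : ℝ)
    (hP : Pp - P = τ • (L ((2:ℝ)⁻¹ • (Qp + Q)) + ((rp + r)/2) • G₁))
    (hQ : Qp - Q = τ • (-(L ((2:ℝ)⁻¹ • (Pp + P))) - ((rp + r)/2) • G₂)) :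
    (‖Pp‖^2 + ‖Qp‖^2) - (‖P‖^2 + ‖Q‖^2) =
      2 * τ * ((rp + r)/2) *
        (⟪G₁, (2:ℝ)⁻¹ • (Pp + P)⟫ - ⟪G₂, (2:ℝ)⁻¹ • (Qp + Q)⟫) := by
  have key : ∀ a b : H, ‖a‖^2 - ‖b‖^2 = ⟪a - b, a + b⟫ := by
    intro a b
    rw [inner_sub_left, inner_add_right, inner_add_right,
      real_inner_self_eq_norm_sq, real_inner_self_eq_norm_sq,
      real_inner_comm a b]
    ring
  set A := (2:ℝ)⁻¹ • (Pp + P) with hAdef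
  set B := (2:ℝ)⁻¹ • (Qp + Q) with hBdef
  set s := (rp + r)/2 with hsdef
  have hA : Pp + P = (2:ℝ) • A := by rw [hAdef, smul_smul]; norm_num
  have hB : Qp + Q = (2:ℝ) • B := by rw [hBdef, smul_smul]; norm_num
  have h1 : ‖Pp‖^2 - ‖P‖^2 = 2 * τ * (⟪L B, A⟫ + s * ⟪G₁, A⟫) := by
    rw [key, hA, hP]
    simp [inner_smul_left, inner_smul_right, inner_add_left]
    ring
  have h2 : ‖Qp‖^2 - ‖Q‖^2 = 2 * τ * (-⟪L A, B⟫ - s * ⟪G₂, B⟫) := by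
    rw [key, hB, hQ]
    simp [inner_smul_left, inner_smul_right, inner_sub_left, inner_neg_left]
    ring
  have hsym : ⟪L B, A⟫ = ⟪L A, B⟫ := by rw [hL B A, real_inner_comm]
  have : (‖Pp‖^2 + ‖Qp‖^2) - (‖P‖^2 + ‖Q‖^2)
      = (‖Pp‖^2 - ‖P‖^2) + (‖Qp‖^2 - ‖Q‖^2) := by ring
  rw [this, h1, h2, hsym]
  ring
end

section
/- Let E be a real Hilbert space, f : ℝ → E three times continuously differentiable, t ∈ ℝ and τ > 0. Then ‖(f(t+τ) − f(t))/τ − f'(t + τ/2)‖² ≤ τ³ · ∫_t^{t+τ} ‖f'''(s)‖² ds. -/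
/-!
Expanding `f` to second order around the midpoint `m = t + τ / 2`, the second-order terms cancel
because `t + τ` and `t` are symmetric about `m`, so `f (t + τ) - f t - τ • f' m` is a difference of
two integral Taylor remainders. Their kernels `(x - s) ^ 2 / 2` are at most `τ ^ 2 / 8` on the two
half-intervals, which bounds the truncation error by `τ / 8 * ∫ ‖f'''‖`; Cauchy–Schwarz then turns
this `L¹` bound into the `L²` bound, even with the constant `1 / 64`.
-/

open MeasureTheory Set Nat

section

variable {E : Type*} [NormedAddCommGroup E] [NormedSpace ℝ E]

theorem taylor_integral_remainder_of_contDiff [CompleteSpace E] {f : ℝ → E} {n : ℕ}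
    (hf : ContDiff ℝ (n + 1) f) (x₀ x : ℝ) :
    f x - ∑ k ∈ Finset.range (n + 1), ((k ! : ℝ)⁻¹ * (x - x₀) ^ k) • iteratedDeriv k f x₀ =
      ∫ t in x₀..x, ((x - t) ^ n / n !) • iteratedDeriv (n + 1) f t := by
  rcases eq_or_ne x₀ x with rfl | hne
  · simp [Finset.sum_range_succ']
  have hs : UniqueDiffOn ℝ (uIcc x₀ x) := uniqueDiffOn_uIcc hne
  have hderiv : ∀ k ≤ n + 1, EqOn (iteratedDerivWithin k f (uIcc x₀ x)) (iteratedDeriv k f)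
      (uIcc x₀ x) := fun k hk y hy =>
    iteratedDerivWithin_eq_iteratedDeriv hs ((hf.of_le (by exact_mod_cast hk)).contDiffAt) hy
  rw [← Finset.sum_congr rfl fun k hk => congrArg _ (hderiv k
      (by simp at hk; omega) left_mem_uIcc), ← taylor_within_apply,
    taylor_integral_remainder (by exact_mod_cast hf.contDiffOn)]
  exact intervalIntegral.integral_congr fun y hy => congrArg _ (hderiv _ le_rfl hy)

theorem norm_intervalIntegral_smul_le {a b c : ℝ} (hab : a ≤ b) {k : ℝ → ℝ} {g : ℝ → E}
    (hk : ∀ s ∈ Ioc a b, |k s| ≤ c) (hg : IntervalIntegrable g volume a b) :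
    ‖∫ s in a..b, k s • g s‖ ≤ c * ∫ s in a..b, ‖g s‖ := by
  rw [← intervalIntegral.integral_const_mul]
  refine intervalIntegral.norm_integral_le_of_norm_le hab
    (Filter.Eventually.of_forall fun s hs => ?_) (hg.norm.const_mul c)
  rw [norm_smul, Real.norm_eq_abs]
  exact mul_le_mul_of_nonneg_right (hk s hs) (norm_nonneg _)

theorem sq_intervalIntegral_le_mul_intervalIntegral_sq {a b : ℝ} (hab : a ≤ b) {g : ℝ → ℝ}
    (hg : IntervalIntegrable g volume a b)
    (hg2 : IntervalIntegrable (fun s => g s ^ 2) volume a b) :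
    (∫ s in a..b, g s) ^ 2 ≤ (b - a) * ∫ s in a..b, g s ^ 2 := by
  rcases hab.eq_or_lt with rfl | hlt
  · simp
  obtain ⟨J, hJ⟩ : ∃ J, ∫ s in a..b, g s = J := ⟨_, rfl⟩
  have hvariance : ∫ s in a..b, ((b - a) * g s - J) ^ 2 =
      (b - a) * ((b - a) * (∫ s in a..b, g s ^ 2) - J ^ 2) := by
    have hpoint : ∀ s, ((b - a) * g s - J) ^ 2 =
        (b - a) ^ 2 * g s ^ 2 - 2 * (b - a) * J * g s + J ^ 2 := fun s => by ring
    simp_rw [hpoint]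
    rw [intervalIntegral.integral_add ((hg2.const_mul _).sub (hg.const_mul _))
        intervalIntegrable_const, intervalIntegral.integral_sub (hg2.const_mul _) (hg.const_mul _),
      intervalIntegral.integral_const_mul, intervalIntegral.integral_const_mul, hJ,
      intervalIntegral.integral_const, smul_eq_mul]
    ring
  have hnonneg : 0 ≤ ∫ s in a..b, ((b - a) * g s - J) ^ 2 :=
    intervalIntegral.integral_nonneg hab fun s _ => sq_nonneg _
  rw [hvariance, mul_nonneg_iff_of_pos_left (sub_pos.2 hlt), sub_nonneg] at hnonneg
  rwa [hJ]

theorem sub_sub_smul_deriv_midpoint_eq_integral [CompleteSpace E] {f : ℝ → E}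
    (hf : ContDiff ℝ 3 f) (t τ : ℝ) :
    f (t + τ) - f t - τ • deriv f (t + τ / 2) =
      (∫ s in t + τ / 2..t + τ, ((t + τ - s) ^ 2 / 2) • iteratedDeriv 3 f s) -
        ∫ s in t + τ / 2..t, ((t - s) ^ 2 / 2) • iteratedDeriv 3 f s := by
  have hright := taylor_integral_remainder_of_contDiff (n := 2) hf (t + τ / 2) (t + τ)
  have hleft := taylor_integral_remainder_of_contDiff (n := 2) hf (t + τ / 2) t
  simp only [Finset.sum_range_succ, Finset.sum_range_zero, iteratedDeriv_zero,
    iteratedDeriv_one] at hright hleft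
  norm_num at hright hleft
  rw [← hright, ← hleft]
  module

theorem norm_smul_sub_sub_deriv_midpoint_le [CompleteSpace E] {f : ℝ → E}
    (hf : ContDiff ℝ 3 f) {t τ : ℝ} (hτ : 0 < τ) :
    ‖τ⁻¹ • (f (t + τ) - f t) - deriv f (t + τ / 2)‖ ≤
      τ / 8 * ∫ s in t..t + τ, ‖iteratedDeriv 3 f s‖ := by
  have hcont : Continuous (iteratedDeriv 3 f) := hf.continuous_iteratedDeriv 3 le_rfl
  have hkernel : ∀ x s, |x - s| ≤ τ / 2 → |(x - s) ^ 2 / 2| ≤ τ ^ 2 / 8 := fun x s h => by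
    rw [abs_of_nonneg (by positivity)]
    nlinarith [abs_nonneg (x - s), sq_abs (x - s)]
  have hright : ‖∫ s in t + τ / 2..t + τ, ((t + τ - s) ^ 2 / 2) • iteratedDeriv 3 f s‖ ≤
      τ ^ 2 / 8 * ∫ s in t + τ / 2..t + τ, ‖iteratedDeriv 3 f s‖ :=
    norm_intervalIntegral_smul_le (by linarith)
      (fun s hs => hkernel _ _ (abs_le.2 ⟨by linarith [hs.2], by linarith [hs.1]⟩))
      (hcont.intervalIntegrable _ _)
  have hleft : ‖∫ s in t + τ / 2..t, ((t - s) ^ 2 / 2) • iteratedDeriv 3 f s‖ ≤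
      τ ^ 2 / 8 * ∫ s in t..t + τ / 2, ‖iteratedDeriv 3 f s‖ := by
    rw [intervalIntegral.integral_symm, norm_neg]
    exact norm_intervalIntegral_smul_le (by linarith)
      (fun s hs => hkernel _ _ (abs_le.2 ⟨by linarith [hs.2], by linarith [hs.1]⟩))
      (hcont.intervalIntegrable _ _)
  calc ‖τ⁻¹ • (f (t + τ) - f t) - deriv f (t + τ / 2)‖
      = τ⁻¹ * ‖f (t + τ) - f t - τ • deriv f (t + τ / 2)‖ := by
        rw [← norm_smul_of_nonneg (inv_nonneg.2 hτ.le), smul_sub _ (f (t + τ) - f t), smul_smul,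
          inv_mul_cancel₀ hτ.ne', one_smul]
    _ ≤ τ⁻¹ * (τ ^ 2 / 8 * (∫ s in t + τ / 2..t + τ, ‖iteratedDeriv 3 f s‖) +
          τ ^ 2 / 8 * ∫ s in t..t + τ / 2, ‖iteratedDeriv 3 f s‖) := by
        rw [sub_sub_smul_deriv_midpoint_eq_integral hf]
        gcongr
        exact (norm_sub_le _ _).trans (add_le_add hright hleft)
    _ = τ / 8 * ∫ s in t..t + τ, ‖iteratedDeriv 3 f s‖ := by
        rw [← mul_add, add_comm, intervalIntegral.integral_add_adjacent_intervals
          (hcont.norm.intervalIntegrable _ _) (hcont.norm.intervalIntegrable _ _)]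
        field_simp

end

/-- Truncation error bound for the Crank–Nicolson difference quotient at the
midpoint, for a Hilbert-space-valued function. -/
theorem crank_nicolson_difference_quotient_truncation_error
    {E : Type*} [NormedAddCommGroup E] [InnerProductSpace ℝ E] [CompleteSpace E]
    (f : ℝ → E) (hf : ContDiff ℝ 3 f) (t τ : ℝ) (hτ : 0 < τ) :
    ‖τ⁻¹ • (f (t + τ) - f t) - deriv f (t + τ/2)‖^2 ≤
      τ^3 * ∫ s in t..(t + τ), ‖iteratedDeriv 3 f s‖^2 := by
  have hcont : Continuous (iteratedDeriv 3 f) := hf.continuous_iteratedDeriv 3 le_rfl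
  have hL2 : 0 ≤ ∫ s in t..(t + τ), ‖iteratedDeriv 3 f s‖^2 :=
    intervalIntegral.integral_nonneg (by linarith) fun s _ => sq_nonneg _
  have hcs := sq_intervalIntegral_le_mul_intervalIntegral_sq (by linarith : t ≤ t + τ)
    (hcont.norm.intervalIntegrable _ _) ((hcont.norm.pow 2).intervalIntegrable _ _)
  rw [add_sub_cancel_left] at hcs
  calc ‖τ⁻¹ • (f (t + τ) - f t) - deriv f (t + τ/2)‖^2
      ≤ (τ / 8 * ∫ s in t..t + τ, ‖iteratedDeriv 3 f s‖) ^ 2 :=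
        pow_le_pow_left₀ (norm_nonneg _) (norm_smul_sub_sub_deriv_midpoint_le hf hτ) 2
    _ = τ ^ 2 / 64 * (∫ s in t..t + τ, ‖iteratedDeriv 3 f s‖) ^ 2 := by ring
    _ ≤ τ ^ 2 / 64 * (τ * ∫ s in t..(t + τ), ‖iteratedDeriv 3 f s‖^2) := by gcongr
    _ ≤ τ^3 * ∫ s in t..(t + τ), ‖iteratedDeriv 3 f s‖^2 := by nlinarith [pow_pos hτ 3]
end

section
/- Let H be a real inner product space, L : H → H a symmetric linear map (⟨L x, y⟩ = ⟨x, L y⟩ for all x, y), τ > 0, φ⁺, φ, G ∈ H and r⁺, r ∈ ℝ. Suppose (φ⁺ − φ)/τ = ½·L((φ⁺+φ)/2) − ((r⁺+r)/2)·G and r⁺ − r = ½·⟨G, φ⁺ − φ⟩. Define the modified energy Ẽ(ψ, s) := −¼·⟨L(ψ), ψ⟩ + s². Then Ẽ(φ⁺, r⁺) + (1/τ)·‖φ⁺ − φ‖² = Ẽ(φ, r); in particular Ẽ(φ⁺, r⁺) ≤ Ẽ(φ, r). -/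
open scoped RealInnerProductSpace

/-- Dissipation of the modified SAV energy by one step of the CN-SAV scheme for
the normalized gradient flow. -/
theorem sav_gradient_flow_energy_dissipation
    {H : Type*} [NormedAddCommGroup H] [InnerProductSpace ℝ H]
    (L : H →ₗ[ℝ] H) (hL : ∀ x y : H, ⟪L x, y⟫ = ⟪x, L y⟫)
    (τ : ℝ) (hτ : 0 < τ) (φp φ G : H) (rp r : ℝ)
    (hφ : τ⁻¹ • (φp - φ) =
      (2:ℝ)⁻¹ • L ((2:ℝ)⁻¹ • (φp + φ)) - ((rp + r)/2) • G)
    (hr : rp - r = (1/2) * ⟪G, φp - φ⟫) :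
    ((-(4:ℝ)⁻¹ * ⟪L φp, φp⟫ + rp^2) + τ⁻¹ * ‖φp - φ‖^2 =
        -(4:ℝ)⁻¹ * ⟪L φ, φ⟫ + r^2) ∧
      (-(4:ℝ)⁻¹ * ⟪L φp, φp⟫ + rp^2 ≤ -(4:ℝ)⁻¹ * ⟪L φ, φ⟫ + r^2) := by
  have h1 := congrArg (fun x => ⟪x, φp - φ⟫) hφ
  simp only [map_smul, map_add, inner_smul_left, inner_sub_left, inner_sub_right,
    inner_add_left, RCLike.inner_apply, conj_trivial] at h1
  have hsym : ⟪L φ, φp⟫ = ⟪L φp, φ⟫ := by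
    rw [hL, real_inner_comm]
  rw [inner_sub_right G φp φ] at hr
  have hns : ⟪φp, φp⟫ - ⟪φ, φp⟫ - (⟪φp, φ⟫ - ⟪φ, φ⟫) = ‖φp - φ‖^2 := by
    rw [← real_inner_self_eq_norm_sq (φp - φ)]
    simp only [inner_sub_left, inner_sub_right]

  have hr2 : rp^2 - r^2 = (rp + r)/2 * (⟪G, φp⟫ - ⟪G, φ⟫) := by
    linear_combination (rp + r) * hr
  have key : τ⁻¹ * ‖φp - φ‖^2 =
      (4:ℝ)⁻¹ * ⟪L φp, φp⟫ - (4:ℝ)⁻¹ * ⟪L φ, φ⟫ - (rp^2 - r^2) := by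
    rw [← hns]; linarith [h1, hr2, hsym]
  refine ⟨by linarith, ?_⟩
  have hpos : 0 ≤ τ⁻¹ * ‖φp - φ‖^2 := mul_nonneg (by positivity) (sq_nonneg _)
  linarith
end

section
/- Let H be a real inner product space, L : H → H a symmetric linear map with ⟨L x, x⟩ ≥ 0 for all x ∈ H, and τ ≠ 0. Suppose sequences P, Q, G₁, G₂ : ℕ → H and r : ℕ → ℝ satisfy, for every k ∈ ℕ: P(k+1) − P(k) = τ·(L((Q(k+1)+Q(k))/2) + ((r(k+1)+r(k))/2)·G₁(k)), Q(k+1) − Q(k) = τ·(−L((P(k+1)+P(k))/2) − ((r(k+1)+r(k))/2)·G₂(k)), and r(k+1) − r(k) = ½(⟨G₁(k), Q(k+1)−Q(k)⟩ + ⟨G₂(k), P(k+1)−P(k)⟩). Set H̃₀ := ½(⟨L(P(0)), P(0)⟩ + ⟨L(Q(0)), Q(0)⟩) + r(0)². Then for every k ∈ ℕ: ⟨L(P(k)), P(k)⟩ ≤ 2·H̃₀, ⟨L(Q(k)), Q(k)⟩ ≤ 2·H̃₀, and r(k)² ≤ H̃₀. -/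
open scoped RealInnerProductSpace

/-- A priori bounds on the CN-SAV iterates from the conservation of the
modified discrete Hamiltonian. -/
theorem sav_a_priori_bounds_from_hamiltonian
    {H : Type*} [NormedAddCommGroup H] [InnerProductSpace ℝ H]
    (L : H →ₗ[ℝ] H) (hL : ∀ x y : H, ⟪L x, y⟫ = ⟪x, L y⟫)
    (hLpos : ∀ x : H, 0 ≤ ⟪L x, x⟫)
    (τ : ℝ) (hτ : τ ≠ 0)
    (P Q G₁ G₂ : ℕ → H) (r : ℕ → ℝ)
    (hP : ∀ k : ℕ, P (k+1) - P k =
      τ • (L ((2:ℝ)⁻¹ • (Q (k+1) + Q k)) + ((r (k+1) + r k)/2) • G₁ k))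
    (hQ : ∀ k : ℕ, Q (k+1) - Q k =
      τ • (-(L ((2:ℝ)⁻¹ • (P (k+1) + P k))) - ((r (k+1) + r k)/2) • G₂ k))
    (hr : ∀ k : ℕ, r (k+1) - r k =
      (1/2) * (⟪G₁ k, Q (k+1) - Q k⟫ + ⟪G₂ k, P (k+1) - P k⟫)) :
    ∀ k : ℕ,
      ⟪L (P k), P k⟫ ≤
        2 * ((1/2) * (⟪L (P 0), P 0⟫ + ⟪L (Q 0), Q 0⟫) + (r 0)^2) ∧
      ⟪L (Q k), Q k⟫ ≤
        2 * ((1/2) * (⟪L (P 0), P 0⟫ + ⟪L (Q 0), Q 0⟫) + (r 0)^2) ∧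
      (r k)^2 ≤ (1/2) * (⟪L (P 0), P 0⟫ + ⟪L (Q 0), Q 0⟫) + (r 0)^2 := by
  -- conservation of the modified Hamiltonian
  have key : ∀ k : ℕ,
      ⟪L (P (k+1)), P (k+1)⟫ + ⟪L (Q (k+1)), Q (k+1)⟫ + 2*(r (k+1))^2
        = ⟪L (P k), P k⟫ + ⟪L (Q k), Q k⟫ + 2*(r k)^2 := by
    intro k
    have hdP := hP k
    have hdQ := hQ k
    have hdr := hr k
    set A := P (k+1) + P k with hA
    set B := Q (k+1) + Q k with hB
    set ρ := (r (k+1) + r k)/2 with hρ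
    -- symmetry cross terms
    have symP : ⟪L (P k), P (k+1)⟫ = ⟪L (P (k+1)), P k⟫ := by
      rw [hL, real_inner_comm]
    have symQ : ⟪L (Q k), Q (k+1)⟫ = ⟪L (Q (k+1)), Q k⟫ := by
      rw [hL, real_inner_comm]
    have e1 : ⟪L (P (k+1)), P (k+1)⟫ - ⟪L (P k), P k⟫ = ⟪L A, P (k+1) - P k⟫ := by
      rw [hA, map_add, inner_add_left, inner_sub_right, inner_sub_right]
      linarith [symP]
    have e2 : ⟪L (Q (k+1)), Q (k+1)⟫ - ⟪L (Q k), Q k⟫ = ⟪L B, Q (k+1) - Q k⟫ := by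
      rw [hB, map_add, inner_add_left, inner_sub_right, inner_sub_right]
      linarith [symQ]
    -- plug in the scheme
    have h1 : ⟪L A, P (k+1) - P k⟫ = τ*((1/2)*⟪L A, L B⟫ + ρ*⟪L A, G₁ k⟫) := by
      rw [hdP]
      simp [inner_add_right, inner_smul_right, map_smul]
      ring
    have h2 : ⟪L B, Q (k+1) - Q k⟫ = τ*(-(1/2)*⟪L A, L B⟫ - ρ*⟪L B, G₂ k⟫) := by
      rw [hdQ]
      simp [inner_sub_right, inner_smul_right, inner_neg_right, map_smul]
      rw [real_inner_comm (L B) (L A)]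
      ring_nf
      tauto
    have h3 : ⟪G₁ k, Q (k+1) - Q k⟫
        = τ*(-(1/2)*⟪L A, G₁ k⟫ - ρ*⟪G₁ k, G₂ k⟫) := by
      rw [hdQ]
      simp [inner_sub_right, inner_smul_right, inner_neg_right, map_smul]
      rw [real_inner_comm (G₁ k) (L A)]
      ring_nf
      tauto
    have h4 : ⟪G₂ k, P (k+1) - P k⟫
        = τ*((1/2)*⟪L B, G₂ k⟫ + ρ*⟪G₁ k, G₂ k⟫) := by
      rw [hdP]
      simp [inner_add_right, inner_smul_right, map_smul]
      rw [real_inner_comm (G₂ k) (L B), real_inner_comm (G₂ k) (G₁ k)]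
      ring
    have E1 : ⟪L (P (k+1)), P (k+1)⟫ - ⟪L (P k), P k⟫
        = τ*((1/2)*⟪L A, L B⟫ + ρ*⟪L A, G₁ k⟫) := e1.trans h1
    have E2 : ⟪L (Q (k+1)), Q (k+1)⟫ - ⟪L (Q k), Q k⟫
        = τ*(-(1/2)*⟪L A, L B⟫ - ρ*⟪L B, G₂ k⟫) := e2.trans h2
    have E3 : r (k+1) - r k
        = (1/2)*(τ*(-(1/2)*⟪L A, G₁ k⟫ - ρ*⟪G₁ k, G₂ k⟫)
            + τ*((1/2)*⟪L B, G₂ k⟫ + ρ*⟪G₁ k, G₂ k⟫)) := by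
      rw [hdr, h3, h4]
    have hρ2 : r (k+1) + r k = 2*ρ := by rw [hρ]; ring
    linear_combination E1 + E2 + (2*(r (k+1) + r k))*E3
  have cons : ∀ k : ℕ,
      ⟪L (P k), P k⟫ + ⟪L (Q k), Q k⟫ + 2*(r k)^2
        = ⟪L (P 0), P 0⟫ + ⟪L (Q 0), Q 0⟫ + 2*(r 0)^2 := by
    intro k
    induction k with
    | zero => rfl
    | succ n ih => rw [key n, ih]
  intro k
  have h := cons k
  have p1 := hLpos (P k)
  have p2 := hLpos (Q k)
  have p3 : (0:ℝ) ≤ (r k)^2 := sq_nonneg _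
  refine ⟨by linarith, by linarith, by linarith⟩
end
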